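/- Let v ∈ C¹([0,T]) with v(t) ≥ ς₀ > 0, and let Φ₀, Φ̂₁ ∈ C¹([0,T]). Define Π̂₁(ζ,t) := (Φ̂₁(t) + (Φ₀(t)v′(t)/v(t)² − Φ₀′(t)/v(t))·ζ + (Φ₀(t)v′(t)/(2v(t)))·ζ²)·exp(−v(t)ζ). Then for each fixed t, Π̂₁ satisfies ∂²Π̂₁/∂ζ² + v(t)·∂Π̂₁/∂ζ = ∂/∂t (Φ₀(t)·exp(−v(t)ζ)) on (0,∞), with Π̂₁(0,t) = Φ̂₁(t). -/

import Mathlib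

/-! The corrector is a quadratic polynomial in `ζ` times `e^{-vζ}`. For such a function the
operator `f'' + v f'` kills the constant coefficient and maps the rest to the linear polynomial
`(2c₂ - v c₁) - 2 v c₂ ζ` times `e^{-vζ}`, while `∂_t (Φ₀ e^{-vζ}) = (Φ₀' - Φ₀ v' ζ) e^{-vζ}`.
The coefficients of `Π̂₁` are exactly those matching these two linear polynomials. -/

open Real

lemma hasDerivAt_quadratic_mul_exp (a c₀ c₁ c₂ ζ : ℝ) :
    HasDerivAt (fun ζ => (c₀ + c₁ * ζ + c₂ * ζ ^ 2) * exp (-a * ζ))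
      (((c₁ - a * c₀) + (2 * c₂ - a * c₁) * ζ + -(a * c₂) * ζ ^ 2) * exp (-a * ζ)) ζ := by
  have hpoly : HasDerivAt (fun ζ : ℝ => c₀ + c₁ * ζ + c₂ * ζ ^ 2) (c₁ + c₂ * (2 * ζ)) ζ :=
    ((((hasDerivAt_id ζ).const_mul c₁).const_add c₀).add
      ((hasDerivAt_pow 2 ζ).const_mul c₂)).congr_deriv (by norm_num)
  have hexp : HasDerivAt (fun ζ : ℝ => exp (-a * ζ)) (exp (-a * ζ) * -a) ζ := by
    simpa using ((hasDerivAt_id ζ).const_mul (-a)).exp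
  exact (hpoly.mul hexp).congr_deriv (by ring)

lemma deriv_quadratic_mul_exp (a c₀ c₁ c₂ : ℝ) :
    deriv (fun ζ => (c₀ + c₁ * ζ + c₂ * ζ ^ 2) * exp (-a * ζ))
      = fun ζ => ((c₁ - a * c₀) + (2 * c₂ - a * c₁) * ζ + -(a * c₂) * ζ ^ 2) * exp (-a * ζ) :=
  funext fun ζ => (hasDerivAt_quadratic_mul_exp a c₀ c₁ c₂ ζ).deriv

lemma deriv_deriv_add_mul_deriv_quadratic_mul_exp (a c₀ c₁ c₂ ζ : ℝ) :
    deriv (deriv fun ζ => (c₀ + c₁ * ζ + c₂ * ζ ^ 2) * exp (-a * ζ)) ζ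
        + a * deriv (fun ζ => (c₀ + c₁ * ζ + c₂ * ζ ^ 2) * exp (-a * ζ)) ζ
      = ((2 * c₂ - a * c₁) - 2 * a * c₂ * ζ) * exp (-a * ζ) := by
  rw [deriv_quadratic_mul_exp, deriv_quadratic_mul_exp]
  ring

lemma hasDerivAt_mul_exp_neg_mul {Φ v : ℝ → ℝ} {Φ' v' t : ℝ} (hΦ : HasDerivAt Φ Φ' t)
    (hv : HasDerivAt v v' t) (ζ : ℝ) :
    HasDerivAt (fun τ => Φ τ * exp (-v τ * ζ)) ((Φ' - Φ t * v' * ζ) * exp (-v t * ζ)) t :=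
  (hΦ.mul (hv.neg.mul_const ζ).exp).congr_deriv (by simp only [Pi.neg_apply]; ring)

theorem stmt_1_general (T ς₀ : ℝ) (hς : 0 < ς₀)
    (v Φ₀ Φ₁ : ℝ → ℝ)
    (hv : ContDiff ℝ 1 v) (hvb : ∀ t ∈ Set.Icc (0:ℝ) T, ς₀ ≤ v t)
    (hΦ₀ : ContDiff ℝ 1 Φ₀)
    (P1 : ℝ → ℝ → ℝ)
    (hP1 : ∀ ζ t, P1 ζ t =
      (Φ₁ t + (Φ₀ t * deriv v t / (v t) ^ 2 - deriv Φ₀ t / v t) * ζ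
        + (Φ₀ t * deriv v t / (2 * v t)) * ζ ^ 2) * Real.exp (-(v t) * ζ)) :
    ∀ t ∈ Set.Icc (0:ℝ) T,
      (∀ ζ ∈ Set.Ioi (0:ℝ),
          deriv (deriv (fun ζ' => P1 ζ' t)) ζ + v t * deriv (fun ζ' => P1 ζ' t) ζ
            = deriv (fun τ => Φ₀ τ * Real.exp (-(v τ) * ζ)) t) ∧
      P1 0 t = Φ₁ t := by
  intro t ht
  have hvt : v t ≠ 0 := (hς.trans_le (hvb t ht)).ne'
  have hP1t : (fun ζ' => P1 ζ' t) = fun ζ => (Φ₁ t + (Φ₀ t * deriv v t / v t ^ 2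
      - deriv Φ₀ t / v t) * ζ + Φ₀ t * deriv v t / (2 * v t) * ζ ^ 2) * exp (-v t * ζ) :=
    funext fun ζ => hP1 ζ t
  refine ⟨fun ζ _ => ?_, by simp [hP1]⟩
  have hrhs := hasDerivAt_mul_exp_neg_mul (hΦ₀.differentiable one_ne_zero t).hasDerivAt
    (hv.differentiable one_ne_zero t).hasDerivAt ζ
  rw [hrhs.deriv, hP1t, deriv_deriv_add_mul_deriv_quadratic_mul_exp]
  congr 1
  field_simp
  ring

/-- the explicit first-order boundary-layer corrector
`Π̂₁(ζ,t) = (Φ̂₁(t) + (Φ₀(t)v′(t)/v(t)² − Φ₀′(t)/v(t))ζ + (Φ₀(t)v′(t)/(2v(t)))ζ²)·e^{−v(t)ζ}`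
solves `∂²Π̂₁/∂ζ² + v(t)∂Π̂₁/∂ζ = ∂_t(Φ₀(t)e^{−v(t)ζ})` on `(0,∞)` with
`Π̂₁(0,t) = Φ̂₁(t)`. -/
theorem stmt_1 (T ς₀ : ℝ) (hT : 0 < T) (hς : 0 < ς₀)
    (v Φ₀ Φ₁ : ℝ → ℝ)
    (hv : ContDiff ℝ 1 v) (hvb : ∀ t ∈ Set.Icc (0:ℝ) T, ς₀ ≤ v t)
    (hΦ₀ : ContDiff ℝ 1 Φ₀) (hΦ₁ : ContDiff ℝ 1 Φ₁)
    (P1 : ℝ → ℝ → ℝ)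
    (hP1 : ∀ ζ t, P1 ζ t =
      (Φ₁ t + (Φ₀ t * deriv v t / (v t) ^ 2 - deriv Φ₀ t / v t) * ζ
        + (Φ₀ t * deriv v t / (2 * v t)) * ζ ^ 2) * Real.exp (-(v t) * ζ)) :
    ∀ t ∈ Set.Icc (0:ℝ) T,
      (∀ ζ ∈ Set.Ioi (0:ℝ),
          deriv (deriv (fun ζ' => P1 ζ' t)) ζ + v t * deriv (fun ζ' => P1 ζ' t) ζ
            = deriv (fun τ => Φ₀ τ * Real.exp (-(v τ) * ζ)) t) ∧
      P1 0 t = Φ₁ t :=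
  stmt_1_general T ς₀ hς v Φ₀ Φ₁ hv hvb hΦ₀ P1 hP1
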